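/- Consider the best-response opinion dynamics on the ring graph with an odd number n ≥ 3 of vertices, where agent 1 is partially stubborn with parameter K₁ > 0 and all other agents have K_i = 0. Let λ_A be the largest eigenvalue of the matrix A. Then the convergence time T = 1/(1 − λ_A) satisfies T ≤ 2 · max{ (2 + K₁ + (n² − 1)/2)/K₁ , (n² − 1)/4 }. -/

import Mathlib

open Matrix Finset

/-!
Let `v` be an eigenvector of `A` for the eigenvalue `λ` and put `w i = 2 + K i`. Summation by
parts turns the eigen-equation `λ w_i v_i = v_{i+1} + v_{i-1}` into the energy identity
`(1 - λ) ∑ w_i v_i² = K₁ v_0² + ∑ (v_{i+1} - v_i)²`. On the cycle of length `n = 2m + 1`,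
Cauchy–Schwarz along the two arcs of length `m` leaving vertex `0` gives the Poincaré inequality
`∑ v_i² ≤ (4m + 1) v_0² + m (m + 1) ∑ (v_{i+1} - v_i)²`, and `m (m + 1) = (n² - 1)/4`. Hence
`∑ w_i v_i² ≤ 2M (K₁ v_0² + ∑ (v_{i+1} - v_i)²)` for the maximum `M` of the statement, that is
`1 - λ ≥ 1 / (2M)`.
-/
theorem Matrix.exists_mulVec_eq_smul_of_mem_spectrum {ι : Type*} [Fintype ι] [DecidableEq ι]
    {K : Type*} [Field K] {A : Matrix ι ι K} {μ : K} (hμ : μ ∈ spectrum K A) :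
    ∃ v : ι → K, v ≠ 0 ∧ A *ᵥ v = μ • v := by
  rw [← Matrix.spectrum_toLin', ← Module.End.hasEigenvalue_iff_mem_spectrum] at hμ
  obtain ⟨v, hv⟩ := hμ.exists_hasEigenvector
  exact ⟨v, hv.2, hv.apply_eq_smul⟩

theorem Matrix.mulVec_apply_of_eq_ite_add_or_sub {G R : Type*} [AddCommGroup G] [Fintype G]
    [DecidableEq G] [CommSemiring R] {a : G} (ha : a ≠ -a) {c : G → R} {A : Matrix G G R}
    (hA : ∀ i j, A i j = if j = i + a ∨ j = i - a then c i else 0) (v : G → R) (i : G) :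
    (A *ᵥ v) i = c i * (v (i + a) + v (i - a)) := by
  have hne : i + a ≠ i - a := by
    rw [sub_eq_add_neg]; exact fun h => ha (add_left_cancel h)
  simp only [mulVec, dotProduct, hA, ite_mul, zero_mul, sum_ite, sum_const_zero, add_zero,
    ← mul_sum]
  congr 1
  rw [filter_or, filter_eq', filter_eq', if_pos (mem_univ _), if_pos (mem_univ _),
    sum_union (disjoint_singleton.2 hne), sum_singleton, sum_singleton]

theorem ZMod.sum_eq_sum_range {M : Type*} [AddCommMonoid M] {n : ℕ} [NeZero n] (f : ZMod n → M) :
    ∑ i, f i = ∑ j ∈ range n, f j := by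
  refine sum_nbij' ZMod.val Nat.cast (fun a _ => mem_range.2 a.val_lt) (fun _ _ => mem_univ _)
    (fun a _ => a.natCast_zmod_val) (fun j hj => ZMod.val_cast_of_lt (mem_range.1 hj))
    (fun a _ => by rw [a.natCast_zmod_val])

theorem ZMod.sum_eq_add_sum_range_add_neg {M : Type*} [AddCommMonoid M] {n m : ℕ} [NeZero n]
    (hm : n = 2 * m + 1) (f : ZMod n → M) :
    ∑ i, f i = f 0 + ∑ k ∈ range m, (f (k + 1) + f (-(k + 1))) := by
  have hneg : ∀ k < m, ((2 * m - k : ℕ) : ZMod n) = -(k + 1) := by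
    intro k hk
    rw [eq_neg_iff_add_eq_zero, ← Nat.cast_add_one, ← Nat.cast_add,
      show 2 * m - k + (k + 1) = n by omega, ZMod.natCast_self]
  rw [ZMod.sum_eq_sum_range, show range n = range (m + 1 + m) by rw [hm]; ring_nf, sum_range_add,
    sum_range_succ', sum_add_distrib, Nat.cast_zero, add_comm _ (f 0), add_assoc]
  push_cast
  congr 2
  rw [← sum_range_reflect]
  refine sum_congr rfl fun k hk => ?_
  have hk := mem_range.1 hk
  rw [← hneg k hk, show 2 * m - k = m + 1 + (m - 1 - k) by omega, Nat.cast_add, Nat.cast_add_one]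

theorem sum_sq_shift_sub_eq {G R : Type*} [AddCommGroup G] [Fintype G] [CommRing R] (a : G)
    (v : G → R) :
    ∑ i, (v (i + a) - v i) ^ 2 = ∑ i, v i * (2 * v i - (v (i + a) + v (i - a))) := by
  have hsq : ∑ i, v (i + a) ^ 2 = ∑ i, v i ^ 2 :=
    Fintype.sum_equiv (Equiv.addRight a) _ _ fun _ => rfl
  have hcross : ∑ i, v i * v (i - a) = ∑ i, v (i + a) * v i :=
    Fintype.sum_equiv (Equiv.subRight a) _ _ fun i => by simp
  have lhs : ∑ i, (v (i + a) - v i) ^ 2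
      = ∑ i, v (i + a) ^ 2 + ∑ i, v i ^ 2 - 2 * ∑ i, v (i + a) * v i := by
    simp only [mul_sum, ← sum_add_distrib, ← sum_sub_distrib]
    exact sum_congr rfl fun i _ => by ring
  have rhs : ∑ i, v i * (2 * v i - (v (i + a) + v (i - a)))
      = 2 * ∑ i, v i ^ 2 - ∑ i, v (i + a) * v i - ∑ i, v i * v (i - a) := by
    simp only [mul_sum, ← sum_sub_distrib]
    exact sum_congr rfl fun i _ => by ring
  rw [lhs, rhs, hsq, hcross]
  ring

theorem one_sub_mul_sum_weighted_sq_eq {G R : Type*} [AddCommGroup G] [Fintype G] [CommRing R]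
    {a : G} {K v : G → R} {μ : R} (h : ∀ i, μ * ((2 + K i) * v i) = v (i + a) + v (i - a)) :
    (1 - μ) * ∑ i, (2 + K i) * v i ^ 2 = ∑ i, K i * v i ^ 2 + ∑ i, (v (i + a) - v i) ^ 2 := by
  rw [sum_sq_shift_sub_eq, mul_sum, ← sum_add_distrib]
  exact sum_congr rfl fun i _ => by linear_combination (-v i) * h i

theorem sum_range_sq_succ_le (u : ℕ → ℝ) (m : ℕ) :
    ∑ k ∈ range m, u (k + 1) ^ 2
      ≤ 2 * m * u 0 ^ 2 + m * (m + 1) * ∑ k ∈ range m, (u (k + 1) - u k) ^ 2 := by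
  set D := ∑ k ∈ range m, (u (k + 1) - u k) ^ 2
  have hpoint : ∀ k ∈ range m, u (k + 1) ^ 2 ≤ 2 * u 0 ^ 2 + 2 * ((k : ℝ) + 1) * D := by
    intro k hk
    have hcs : (u (k + 1) - u 0) ^ 2 ≤ ((k : ℝ) + 1) * D := by
      calc (u (k + 1) - u 0) ^ 2 = (∑ j ∈ range (k + 1), (u (j + 1) - u j)) ^ 2 := by
            rw [sum_range_sub]
        _ ≤ ((k : ℝ) + 1) * ∑ j ∈ range (k + 1), (u (j + 1) - u j) ^ 2 := by
            simpa using sq_sum_le_card_mul_sum_sq (s := range (k + 1))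
              (f := fun j => u (j + 1) - u j)
        _ ≤ ((k : ℝ) + 1) * D :=
            mul_le_mul_of_nonneg_left (sum_le_sum_of_subset_of_nonneg
              (range_subset_range.2 (mem_range.1 hk)) fun _ _ _ => sq_nonneg _) (by positivity)
    nlinarith [sq_nonneg (u (k + 1) - 2 * u 0)]
  have hgauss : ∀ m : ℕ, ∑ k ∈ range m, 2 * ((k : ℝ) + 1) = m * (m + 1) := by
    intro m
    induction m with
    | zero => simp
    | succ m ih => rw [sum_range_succ, ih]; push_cast; ring
  calc ∑ k ∈ range m, u (k + 1) ^ 2 ≤ ∑ k ∈ range m, (2 * u 0 ^ 2 + 2 * ((k : ℝ) + 1) * D) :=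
        sum_le_sum hpoint
    _ = 2 * m * u 0 ^ 2 + m * (m + 1) * D := by
        rw [sum_add_distrib, sum_const, card_range, ← sum_mul, hgauss, nsmul_eq_mul]
        ring

theorem ZMod.sum_sq_le_of_eq_two_mul_add_one {n m : ℕ} [NeZero n] (hm : n = 2 * m + 1)
    (v : ZMod n → ℝ) :
    ∑ i, v i ^ 2 ≤ (4 * m + 1) * v 0 ^ 2 + m * (m + 1) * ∑ i, (v (i + 1) - v i) ^ 2 := by
  set uR : ℕ → ℝ := fun k => v k
  set uL : ℕ → ℝ := fun k => v (-k)
  have hS : ∑ i, v i ^ 2 = v 0 ^ 2 + ∑ k ∈ range m, (uR (k + 1) ^ 2 + uL (k + 1) ^ 2) := by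
    simp [uR, uL, ZMod.sum_eq_add_sum_range_add_neg hm]
  have hD : ∑ k ∈ range m, (uR (k + 1) - uR k) ^ 2 + ∑ k ∈ range m, (uL (k + 1) - uL k) ^ 2
      ≤ ∑ i, (v (i + 1) - v i) ^ 2 := by
    rw [ZMod.sum_eq_add_sum_range_add_neg hm, sum_add_distrib, ← add_assoc]
    gcongr ?_ + ?_
    · calc ∑ k ∈ range m, (uR (k + 1) - uR k) ^ 2
            ≤ ∑ k ∈ range (m + 1), (uR (k + 1) - uR k) ^ 2 :=
            sum_le_sum_of_subset_of_nonneg (range_subset_range.2 m.le_succ)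
              fun _ _ _ => sq_nonneg _
          _ = _ := by rw [sum_range_succ', add_comm]; simp [uR]
    · refine (sum_congr rfl fun k _ => ?_).le
      rw [show -((k : ZMod n) + 1) + 1 = -k by ring]
      simp only [uL, Nat.cast_add_one]
      ring
  have hR := sum_range_sq_succ_le uR m
  have hL := sum_range_sq_succ_le uL m
  have hmm : (0 : ℝ) ≤ m * (m + 1) := by positivity
  have := mul_le_mul_of_nonneg_left hD hmm
  simp only [uR, uL, Nat.cast_zero, neg_zero] at hR hL hS this ⊢
  rw [hS, sum_add_distrib]
  linarith

theorem ZMod.two_mul_sum_sq_add_le {n m : ℕ} [NeZero n] (hm : n = 2 * m + 1) (v : ZMod n → ℝ)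
    {c : ℝ} (hc : 0 < c) :
    2 * ∑ i, v i ^ 2 + c * v 0 ^ 2
      ≤ 2 * max ((2 + c + ((n : ℝ) ^ 2 - 1) / 2) / c) (((n : ℝ) ^ 2 - 1) / 4)
        * (c * v 0 ^ 2 + ∑ i, (v (i + 1) - v i) ^ 2) := by
  set M := max ((2 + c + ((n : ℝ) ^ 2 - 1) / 2) / c) (((n : ℝ) ^ 2 - 1) / 4)
  have hn : (n : ℝ) ^ 2 - 1 = 4 * (m * (m + 1)) := by rw [hm]; push_cast; ring
  have hM1 : 2 + c + 2 * (m * (m + 1)) ≤ M * c := by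
    linear_combination (div_le_iff₀ hc).1 (le_max_left _ _ : _ ≤ M) - hn / 2
  have hM2 : (m : ℝ) * (m + 1) ≤ M := by
    linear_combination (le_max_right _ _ : _ ≤ M) - hn / 4
  have hD : 0 ≤ ∑ i, (v (i + 1) - v i) ^ 2 := by positivity
  have h1 := mul_le_mul_of_nonneg_right hM1 (sq_nonneg (v 0))
  have h2 := mul_le_mul_of_nonneg_right hM2 hD
  -- the slack left in the coefficient of `v 0 ^ 2`
  have h3 : 0 ≤ ((2 * m - 1) ^ 2 + 1 + c) * v 0 ^ 2 := by positivity
  linarith [ZMod.sum_sq_le_of_eq_two_mul_add_one hm v]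

theorem one_div_one_sub_le_of_mul_eq {Q E μ c : ℝ} (hQ : 0 < Q) (hE : 0 ≤ E)
    (henergy : (1 - μ) * Q = E) (hQE : Q ≤ c * E) : 1 / (1 - μ) ≤ c := by
  have hE' : 0 < E := hE.lt_of_ne fun h => by rw [← h, mul_zero] at hQE; linarith
  have hgap : 0 < 1 - μ := pos_of_mul_pos_left (henergy ▸ hE') hQ.le
  rw [div_le_iff₀ hgap]
  refine le_of_mul_le_mul_right ?_ hQ
  calc 1 * Q ≤ c * E := by rwa [one_mul]
    _ = c * (1 - μ) * Q := by rw [← henergy]; ring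

theorem stmt19_general {n : ℕ} [NeZero n] (hn : 3 ≤ n) (hodd : Odd n)
    (K1 : ℝ) (hK1 : 0 < K1)
    (K : ZMod n → ℝ) (hK0 : K 0 = K1) (hKrest : ∀ i : ZMod n, i ≠ 0 → K i = 0)
    (A : Matrix (ZMod n) (ZMod n) ℝ)
    (hA : ∀ i j : ZMod n,
      A i j = if j = i + 1 ∨ j = i - 1 then 1 / (2 + K i) else 0)
    (lamA : ℝ) (hmem : lamA ∈ spectrum ℝ A) :
    1 / (1 - lamA)
      ≤ 2 * max ((2 + K1 + ((n : ℝ) ^ 2 - 1) / 2) / K1) (((n : ℝ) ^ 2 - 1) / 4) := by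
  obtain ⟨m, hm⟩ := hodd
  obtain ⟨v, hv0, hvA⟩ := Matrix.exists_mulVec_eq_smul_of_mem_spectrum hmem
  have hweight : ∀ i, 0 < 2 + K i := fun i => by
    rcases eq_or_ne i 0 with rfl | hi
    · linarith
    · simp [hKrest i hi]
  have : Fact (2 < n) := ⟨hn⟩
  have heig : ∀ i, lamA * ((2 + K i) * v i) = v (i + 1) + v (i - 1) := fun i => by
    have h := congrFun hvA i
    rw [Matrix.mulVec_apply_of_eq_ite_add_or_sub ZMod.neg_one_ne_one.symm hA, Pi.smul_apply,
      smul_eq_mul, one_div, inv_mul_eq_iff_eq_mul₀ (hweight i).ne'] at h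
    linear_combination -h
  have hKsum : ∑ i, K i * v i ^ 2 = K1 * v 0 ^ 2 := by
    rw [Fintype.sum_eq_single 0 fun i hi => by simp [hKrest i hi], hK0]
  have hQ : ∑ i, (2 + K i) * v i ^ 2 = 2 * ∑ i, v i ^ 2 + K1 * v 0 ^ 2 := by
    simp only [add_mul, sum_add_distrib, ← mul_sum, hKsum]
  have hQpos : 0 < ∑ i, (2 + K i) * v i ^ 2 := by
    obtain ⟨i, hi⟩ := Function.ne_iff.mp hv0
    exact sum_pos' (fun j _ => mul_nonneg (hweight j).le (sq_nonneg _))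
      ⟨i, mem_univ _, mul_pos (hweight i) (sq_pos_of_ne_zero hi)⟩
  refine one_div_one_sub_le_of_mul_eq hQpos (by positivity) ?_
    (hQ ▸ ZMod.two_mul_sum_sq_add_le hm v hK1)
  rw [← hKsum]
  exact one_sub_mul_sum_weighted_sq_eq heig

/-- On the ring graph with an odd number `n ≥ 3` of vertices, with a
single partially stubborn agent `0` with parameter `K₁ > 0`, the convergence time
`T = 1/(1 − λ_A)` satisfies `T ≤ 2·max{(2 + K₁ + (n² − 1)/2)/K₁, (n² − 1)/4}`. -/
theorem stmt19 {n : ℕ} [NeZero n] (hn : 3 ≤ n) (hodd : Odd n)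
    (K1 : ℝ) (hK1 : 0 < K1)
    (K : ZMod n → ℝ) (hK0 : K 0 = K1) (hKrest : ∀ i : ZMod n, i ≠ 0 → K i = 0)
    (A : Matrix (ZMod n) (ZMod n) ℝ)
    (hA : ∀ i j : ZMod n,
      A i j = if j = i + 1 ∨ j = i - 1 then 1 / (2 + K i) else 0)
    (lamA : ℝ) (hmem : lamA ∈ spectrum ℝ A) (hub : ∀ μ ∈ spectrum ℝ A, |μ| ≤ lamA) :
    1 / (1 - lamA)
      ≤ 2 * max ((2 + K1 + ((n : ℝ) ^ 2 - 1) / 2) / K1) (((n : ℝ) ^ 2 - 1) / 4) :=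
  stmt19_general hn hodd K1 hK1 K hK0 hKrest A hA lamA hmem
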